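/- If P is a finite poset on n elements with no universal line and height h(P) satisfying h(P) ≤ c·n^s for constants c > 0 and 0 < s ≤ 1, then the number of distinct lines in P is at least c'·n^{2−s} for some constant c' > 0 depending only on c (for n sufficiently large). -/

import Mathlib

open Classical

def pcomp {X : Type*} [PartialOrder X] (a b : X) : Prop := a < b ∨ b < a

def pline {X : Type*} [PartialOrder X] (a b : X) : Set X :=
  if pcomp a b then {a, b} ∪ {x | pcomp x a ∧ pcomp x b} else {a, b}

def plines (X : Type*) [PartialOrder X] : Set (Set X) :=
  {s | ∃ a b : X, a ≠ b ∧ s = pline a b}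

/-!
Let `O` be the number of ordered pairs of distinct incomparable elements. Such a pair spans the
two-point line `{a, b}`, so there are at least `O / 2` lines. Grading `P` by height splits it into
`h` antichains, and Cauchy–Schwarz over the levels gives `n² ≤ h (O + n)`. With no universal line
at most one element is comparable to all others, so `n ≤ O + 1`. If `2h ≤ n` this yields
`n² ≤ 2hO ≤ 2c n^s O`; otherwise `n² < 2hn ≤ 2c n^s n ≤ 4c n^s O`.
-/

open Finset

lemma sq_card_le_card_mul_card_filter_eq {α ι : Type*} [Fintype α] [DecidableEq ι] (f : α → ι)
    (t : Finset ι) (hf : ∀ a, f a ∈ t) :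
    Fintype.card α ^ 2 ≤ #t * #{p : α × α | f p.1 = f p.2} := by
  have hpairs : #{p : α × α | f p.1 = f p.2} = ∑ i ∈ t, #{a | f a = i} ^ 2 := by
    rw [card_eq_sum_card_fiberwise (f := fun p => f p.1) fun p _ => hf p.1]
    refine sum_congr rfl fun i _ => ?_
    rw [sq, ← card_product, filter_filter]
    congr 1
    ext p
    simp only [mem_filter, mem_univ, true_and, mem_product]
    constructor
    · rintro ⟨h, rfl⟩; exact ⟨rfl, h.symm⟩
    · rintro ⟨h1, h2⟩; exact ⟨h1.trans h2.symm, h1⟩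
  rw [hpairs, ← card_univ, card_eq_sum_card_fiberwise fun a _ => hf a]
  exact sq_sum_le_card_mul_sum_sq

section Lines

variable {X : Type*} [PartialOrder X]

lemma pcomp_comm {a b : X} : pcomp a b ↔ pcomp b a := Or.comm

lemma pline_of_not_pcomp {a b : X} (h : ¬ pcomp a b) : pline a b = {a, b} := if_neg h

lemma pline_eq_univ_of_forall_pcomp {a b : X} (hab : a ≠ b) (ha : ∀ x, x ≠ a → pcomp a x)
    (hb : ∀ x, x ≠ b → pcomp b x) : pline a b = Set.univ := by
  rw [pline, if_pos (ha b hab.symm)]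
  refine Set.eq_univ_of_forall fun x => ?_
  by_cases hxa : x = a
  · exact Or.inl (Or.inl hxa)
  by_cases hxb : x = b
  · exact Or.inl (Or.inr hxb)
  exact Or.inr ⟨pcomp_comm.1 (ha x hxa), pcomp_comm.1 (hb x hxb)⟩

variable [Fintype X]

variable (X) in
noncomputable def incompPairs : Finset (X × X) := {p | p.1 ≠ p.2 ∧ ¬ pcomp p.1 p.2}

lemma mem_incompPairs {p : X × X} : p ∈ incompPairs X ↔ p.1 ≠ p.2 ∧ ¬ pcomp p.1 p.2 := by
  simp [incompPairs]

lemma card_incompPairs_le_two_mul_ncard_plines : #(incompPairs X) ≤ 2 * (plines X).ncard := by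
  have hfiber : ∀ t ∈ (incompPairs X).image (fun p => pline p.1 p.2),
      #{q ∈ incompPairs X | pline q.1 q.2 = t} ≤ 2 := by
    intro t ht
    obtain ⟨p, hp, rfl⟩ := mem_image.1 ht
    refine (card_le_card fun q hq => ?_).trans (card_le_two (a := p) (b := p.swap))
    obtain ⟨hq, hqp⟩ := mem_filter.1 hq
    rw [pline_of_not_pcomp (mem_incompPairs.1 hq).2, pline_of_not_pcomp (mem_incompPairs.1 hp).2,
      Set.pair_eq_pair_iff] at hqp
    rcases hqp with ⟨h1, h2⟩ | ⟨h1, h2⟩ <;> simp [Prod.ext_iff, h1, h2]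
  calc #(incompPairs X) ≤ 2 * #((incompPairs X).image fun p => pline p.1 p.2) :=
        card_le_mul_card_image _ 2 hfiber
    _ ≤ 2 * (plines X).ncard := by
      rw [← Set.ncard_coe_finset]
      refine Nat.mul_le_mul_left 2 (Set.ncard_le_ncard ?_ (Set.toFinite _))
      intro t ht
      obtain ⟨p, hp, rfl⟩ := mem_image.1 ht
      exact ⟨p.1, p.2, (mem_incompPairs.1 hp).1, rfl⟩

lemma card_le_card_incompPairs_add_one (hu : ∀ a b : X, a ≠ b → pline a b ≠ Set.univ) :
    Fintype.card X ≤ #(incompPairs X) + 1 := by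
  set G : Finset X := {x | ∃ y, y ≠ x ∧ ¬ pcomp x y}
  have hcomp : ∀ a ∉ G, ∀ x, x ≠ a → pcomp a x := by
    intro a ha x hx
    by_contra hax
    exact ha (mem_filter.2 ⟨mem_univ a, x, hx, hax⟩)
  have hGc : #Gᶜ ≤ 1 := card_le_one.2 fun a ha b hb => by
    by_contra hab
    exact hu a b hab (pline_eq_univ_of_forall_pcomp hab (hcomp a (mem_compl.1 ha))
      (hcomp b (mem_compl.1 hb)))
  have hG : #G ≤ #(incompPairs X) := by
    choose! w hw using fun x (hx : x ∈ G) => (mem_filter.1 hx).2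
    refine card_le_card_of_injOn (fun x => (x, w x)) (fun x hx => ?_) fun x _ y _ hxy =>
      congrArg Prod.fst hxy
    exact mem_incompPairs.2 ⟨(hw x hx).1.symm, (hw x hx).2⟩
  have := card_add_card_compl G
  omega

lemma card_filter_eq_le_card_incompPairs_add {ι : Type*} [DecidableEq ι] (f : X → ι)
    (hf : ∀ x y, x < y → f x ≠ f y) :
    #{p : X × X | f p.1 = f p.2} ≤ #(incompPairs X) + Fintype.card X := by
  calc #{p : X × X | f p.1 = f p.2} ≤ #(incompPairs X ∪ (univ : Finset X).diag) := by
        refine card_le_card fun p hp => ?_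
        have hp : f p.1 = f p.2 := (mem_filter.1 hp).2
        by_cases hdiag : p.1 = p.2
        · simp [hdiag]
        · refine mem_union_left _ (mem_incompPairs.2 ⟨hdiag, ?_⟩)
          rintro (hlt | hlt)
          exacts [hf _ _ hlt hp, hf _ _ hlt hp.symm]
    _ ≤ #(incompPairs X) + Fintype.card X :=
      (card_union_le _ _).trans_eq (by rw [diag_card, card_univ])

end Lines

section Height

variable {X : Type*} [PartialOrder X] {h : ℕ}
  (hle : ∀ ch : Finset X, IsChain (· < ·) (ch : Set X) → #ch ≤ h)
include hle

lemma LTSeries.length_lt_of_forall_chain_card_le (p : LTSeries X) : p.length < h := by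
  have hchain : IsChain (· < ·) ((univ.image p : Finset X) : Set X) := by
    rw [coe_image, coe_univ, Set.image_univ]
    exact p.strictMono.monotone.isChain_range.lt_of_le
  have := hle _ hchain
  rw [card_image_of_injective _ p.strictMono.injective, card_univ, Fintype.card_fin] at this
  omega

lemma height_lt_of_forall_chain_card_le (x : X) : Order.height x < h := by
  by_contra! hx
  obtain ⟨p, -, hp⟩ := Order.exists_series_of_le_height x hx
  exact (LTSeries.length_lt_of_forall_chain_card_le hle p).ne hp

lemma sq_card_le_mul_card_incompPairs_add [Fintype X] :
    Fintype.card X ^ 2 ≤ h * (#(incompPairs X) + Fintype.card X) := by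
  have hmem : ∀ x : X, Order.height x ∈ (range h).image (Nat.cast : ℕ → ℕ∞) := by
    intro x
    have hx := height_lt_of_forall_chain_card_le hle x
    obtain ⟨k, hk⟩ := ENat.ne_top_iff_exists.1 (hx.trans (ENat.natCast_lt_top h)).ne
    rw [← hk, ENat.natCast_lt_natCast] at hx
    exact mem_image.2 ⟨k, mem_range.2 hx, hk⟩
  calc Fintype.card X ^ 2
      ≤ #((range h).image (Nat.cast : ℕ → ℕ∞)) *
          #{p : X × X | Order.height p.1 = Order.height p.2} :=
        sq_card_le_card_mul_card_filter_eq _ _ hmem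
    _ ≤ h * (#(incompPairs X) + Fintype.card X) := by
      refine Nat.mul_le_mul (card_image_le.trans (card_range h).le)
        (card_filter_eq_le_card_incompPairs_add _ fun x y hxy => ?_)
      exact (Order.height_strictMono hxy
        ((height_lt_of_forall_chain_card_le hle x).trans (ENat.natCast_lt_top h))).ne

end Height

lemma sq_le_four_mul_mul_of_sq_le_mul_add {n h O b : ℝ} (hn : 0 ≤ n) (hO : n ≤ 2 * O)
    (hsq : n ^ 2 ≤ h * (O + n)) (hb : h ≤ b) : n ^ 2 ≤ 4 * b * O := by
  rcases le_or_gt (2 * h) n with hh | hh <;> nlinarith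

theorem stmt_17_general (c s : ℝ) (hc : 0 < c) :
    ∃ c' : ℝ, 0 < c' ∧ ∃ N : ℕ, ∀ (X : Type) [Fintype X] [PartialOrder X]
      (n h : ℕ), Fintype.card X = n → N ≤ n →
      (∃ ch : Finset X, IsChain (· < ·) (ch : Set X) ∧ ch.card = h) →
      (∀ ch : Finset X, IsChain (· < ·) (ch : Set X) → ch.card ≤ h) →
      (h : ℝ) ≤ c * (n : ℝ) ^ s →
      (∀ a b : X, a ≠ b → pline a b ≠ Set.univ) →
      c' * (n : ℝ) ^ (2 - s) ≤ ((plines X).ncard : ℝ) := by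
  refine ⟨1 / (8 * c), by positivity, 2, ?_⟩
  rintro X _ _ n h rfl hn - hle hhc hu
  have hO : (Fintype.card X : ℝ) ≤ 2 * #(incompPairs X) := by
    have := card_le_card_incompPairs_add_one hu
    exact_mod_cast (by omega : Fintype.card X ≤ 2 * #(incompPairs X))
  have hL : (#(incompPairs X) : ℝ) ≤ 2 * (plines X).ncard := by
    exact_mod_cast card_incompPairs_le_two_mul_ncard_plines
  have hsq : (Fintype.card X : ℝ) ^ 2 ≤ h * (#(incompPairs X) + Fintype.card X) := by
    exact_mod_cast sq_card_le_mul_card_incompPairs_add hle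
  have hbound := sq_le_four_mul_mul_of_sq_le_mul_add (Nat.cast_nonneg _) hO hsq hhc
  have hn0 : (0 : ℝ) < Fintype.card X := by exact_mod_cast (by omega : 0 < Fintype.card X)
  have hp : (0 : ℝ) < (Fintype.card X : ℝ) ^ s := by positivity
  rw [Real.rpow_sub hn0, Real.rpow_two, div_mul_eq_mul_div, one_mul, div_le_iff₀ (by positivity),
    div_le_iff₀ hp]
  nlinarith [mul_le_mul_of_nonneg_left hL (by positivity : 0 ≤ c * (Fintype.card X : ℝ) ^ s)]

theorem stmt_17 (c s : ℝ) (hc : 0 < c) (hs0 : 0 < s) (hs1 : s ≤ 1) :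
    ∃ c' : ℝ, 0 < c' ∧ ∃ N : ℕ, ∀ (X : Type) [Fintype X] [PartialOrder X]
      (n h : ℕ), Fintype.card X = n → N ≤ n →
      (∃ ch : Finset X, IsChain (· < ·) (ch : Set X) ∧ ch.card = h) →
      (∀ ch : Finset X, IsChain (· < ·) (ch : Set X) → ch.card ≤ h) →
      (h : ℝ) ≤ c * (n : ℝ) ^ s →
      (∀ a b : X, a ≠ b → pline a b ≠ Set.univ) →
      c' * (n : ℝ) ^ (2 - s) ≤ ((plines X).ncard : ℝ) :=
  stmt_17_general c s hc
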